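/- arXiv:0809.1046 — 6 statements merged into one kernel-verified Lean document; each statement's English description precedes it below -/
import Mathlib

section
/- Let q, w be complex numbers with 0 < |q| < 1 and w ≠ 0. Then ∏_{n=0}^∞ (1 + w q^n)(1 + w^{−1} q^n) = (1/φ(q)) · Σ_{n∈ℤ} w^n ( q^{n(n+1)/2} + q^{n(n−1)/2} ), where the infinite product converges and the bilateral series converges absolutely. -/
/-!
Writing `1 + w⁻¹ q^n = w⁻¹ q^n (1 + w q^(-n))`, the partial product over `n ≤ M` becomes an
explicit monomial times `(1 + w) ∏_{k=0}^{2M} (1 + w q^(k-M))`, and the finite `q`-binomial theorem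
expands it as `∑_{m=-M-1}^{M} [2M+1, m+M+1]_q (1 + w) w^m q^(m(m+1)/2)`. Each Gaussian binomial
coefficient `[2M+1, m+M+1]_q` tends to `1/φ(q)` as `M → ∞`, and they are all bounded by one constant,
so Tannery's theorem gives `∏ = φ(q)⁻¹ (1 + w) ∑_m w^m q^(m(m+1)/2)`. Shifting `m` by one in the
`w`-multiple of the series turns this into the stated bilateral sum.
-/

noncomputable def eulerPhi (q : ℂ) : ℂ := ∏' n : ℕ, (1 - q ^ (n + 1))

open Filter Finset Topology

lemma choose_two_succ (n : ℕ) : (n + 1).choose 2 = n.choose 2 + n := by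
  rw [Nat.choose_succ_succ', Nat.choose_one_right, add_comm]

lemma triangle_add_one (n : ℤ) : (n + 1) * (n + 1 + 1) / 2 = n * (n + 1) / 2 + (n + 1) := by
  rw [show (n + 1) * (n + 1 + 1) = n * (n + 1) + (n + 1) * 2 by ring,
    Int.add_mul_ediv_right _ _ two_ne_zero]

lemma choose_two_add_choose_two_sub_mul (M j : ℕ) :
    ((M + 1).choose 2 + j.choose 2 : ℤ) - M * j = ((j : ℤ) - M - 1) * ((j : ℤ) - M - 1 + 1) / 2 := by
  have h2 (n : ℕ) : (n.choose 2 : ℤ) * 2 = n * (n - 1) := by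
    qify
    rw [Nat.cast_choose_two]
    ring
  rw [show ((j : ℤ) - M - 1) * ((j : ℤ) - M - 1 + 1) =
      (((M + 1).choose 2 + j.choose 2 : ℤ) - M * j) * 2 by
    have hM := h2 (M + 1)
    push_cast at hM ⊢
    linear_combination (-1 : ℤ) * h2 j - hM, Int.mul_ediv_cancel _ two_ne_zero]

section

variable {q w : ℂ}

lemma summable_norm_mul_pow (hq1 : ‖q‖ < 1) (z : ℂ) : Summable fun n : ℕ => ‖z * q ^ n‖ := by
  simpa only [norm_mul, norm_pow] using
    (summable_geometric_of_lt_one (norm_nonneg q) hq1).mul_left ‖z‖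

lemma multipliable_one_add_mul_pow (hq1 : ‖q‖ < 1) (z : ℂ) :
    Multipliable fun n : ℕ => 1 + z * q ^ n :=
  multipliable_one_add_of_summable (summable_norm_mul_pow hq1 z)

lemma one_sub_pow_succ_ne_zero (hq1 : ‖q‖ < 1) (n : ℕ) : 1 - q ^ (n + 1) ≠ 0 := by
  have h := pow_lt_one₀ (norm_nonneg q) hq1 n.succ_ne_zero
  rw [← norm_pow] at h
  exact sub_ne_zero.2 fun h1 => by simp [← h1] at h

lemma one_sub_pow_succ_eq (q : ℂ) (n : ℕ) : 1 - q ^ (n + 1) = 1 + -q * q ^ n := by ring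

lemma eulerPhi_ne_zero (hq1 : ‖q‖ < 1) : eulerPhi q ≠ 0 := by
  simp only [eulerPhi, one_sub_pow_succ_eq]
  exact tprod_one_add_ne_zero_of_summable
    (fun n => one_sub_pow_succ_eq q n ▸ one_sub_pow_succ_ne_zero hq1 n) (summable_norm_mul_pow hq1 _)

noncomputable def qPochhammer (q : ℂ) (N : ℕ) : ℂ := ∏ i ∈ range N, (1 - q ^ (i + 1))

lemma qPochhammer_zero (q : ℂ) : qPochhammer q 0 = 1 := prod_range_zero _

lemma qPochhammer_succ (q : ℂ) (N : ℕ) :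
    qPochhammer q (N + 1) = qPochhammer q N * (1 - q ^ (N + 1)) :=
  prod_range_succ _ _

lemma qPochhammer_ne_zero (hq1 : ‖q‖ < 1) (N : ℕ) : qPochhammer q N ≠ 0 :=
  prod_ne_zero_iff.2 fun i _ => one_sub_pow_succ_ne_zero hq1 i

lemma tendsto_qPochhammer (hq1 : ‖q‖ < 1) :
    Tendsto (qPochhammer q) atTop (𝓝 (eulerPhi q)) := by
  simp only [eulerPhi, one_sub_pow_succ_eq]
  exact (multipliable_one_add_mul_pow hq1 (-q)).hasProd.tendsto_prod_nat.congr fun N => by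
    simp only [qPochhammer, one_sub_pow_succ_eq]

noncomputable def gaussBinom (q : ℂ) (m j : ℕ) : ℂ :=
  if j ≤ m then qPochhammer q m / (qPochhammer q j * qPochhammer q (m - j)) else 0

lemma gaussBinom_eq_of_add_eq (q : ℂ) {m j k : ℕ} (h : j + k = m) :
    gaussBinom q m j = qPochhammer q m / (qPochhammer q j * qPochhammer q k) := by
  rw [gaussBinom, if_pos (by omega), show m - j = k by omega]

lemma gaussBinom_of_lt {m j : ℕ} (h : m < j) : gaussBinom q m j = 0 := by
  rw [gaussBinom, if_neg h.not_ge]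

lemma gaussBinom_zero_right (hq1 : ‖q‖ < 1) (m : ℕ) : gaussBinom q m 0 = 1 := by
  rw [gaussBinom, if_pos m.zero_le, Nat.sub_zero, qPochhammer_zero, one_mul,
    div_self (qPochhammer_ne_zero hq1 m)]

lemma gaussBinom_self (hq1 : ‖q‖ < 1) (m : ℕ) : gaussBinom q m m = 1 := by
  rw [gaussBinom, if_pos le_rfl, Nat.sub_self, qPochhammer_zero, mul_one,
    div_self (qPochhammer_ne_zero hq1 m)]

lemma gaussBinom_succ_succ (hq1 : ‖q‖ < 1) (m j : ℕ) :
    gaussBinom q (m + 1) (j + 1) = gaussBinom q m (j + 1) + q ^ (m - j) * gaussBinom q m j := by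
  rcases lt_or_ge m j with h | h
  · rw [gaussBinom_of_lt h, gaussBinom_of_lt (by omega), gaussBinom_of_lt (by omega)]
    ring
  obtain ⟨b, rfl⟩ := Nat.exists_eq_add_of_le h
  rw [Nat.add_sub_cancel_left]
  rcases b with _ | c
  · rw [add_zero, gaussBinom_of_lt j.lt_succ_self, gaussBinom_self hq1, gaussBinom_self hq1]
    ring
  · rw [gaussBinom_eq_of_add_eq q (k := c + 1) (by ring),
      gaussBinom_eq_of_add_eq q (k := c) (by ring), gaussBinom_eq_of_add_eq q (k := c + 1) rfl,
      qPochhammer_succ q (j + (c + 1)), qPochhammer_succ q j, qPochhammer_succ q c,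
      show q ^ (j + (c + 1) + 1) = q ^ (j + 1) * q ^ (c + 1) by ring]
    have hA := qPochhammer_ne_zero hq1 j
    have hB := qPochhammer_ne_zero hq1 c
    have hx := one_sub_pow_succ_ne_zero hq1 j
    have hy := one_sub_pow_succ_ne_zero hq1 c
    generalize qPochhammer q j = A, qPochhammer q c = B, q ^ (j + 1) = x, q ^ (c + 1) = y at *
    field_simp
    ring

theorem prod_one_add_mul_pow_eq_sum_gaussBinom (hq1 : ‖q‖ < 1) (m : ℕ) (z : ℂ) :
    ∏ k ∈ range m, (1 + z * q ^ k) =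
      ∑ j ∈ range (m + 1), q ^ j.choose 2 * gaussBinom q m j * z ^ j := by
  induction m with
  | zero => simp [gaussBinom_zero_right hq1]
  | succ m ih =>
    have pascal : ∀ j ∈ range (m + 1),
        q ^ (j + 1).choose 2 * gaussBinom q (m + 1) (j + 1) * z ^ (j + 1) =
          q ^ (j + 1).choose 2 * gaussBinom q m (j + 1) * z ^ (j + 1) +
            q ^ j.choose 2 * gaussBinom q m j * z ^ j * (z * q ^ m) := by
      intro j hj
      have hexp : (j + 1).choose 2 + (m - j) = j.choose 2 + m := by
        have := mem_range.1 hj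
        rw [choose_two_succ]
        omega
      rw [gaussBinom_succ_succ hq1, mul_add, add_mul, ← mul_assoc, ← pow_add, hexp]
      ring
    have hshift : ∑ j ∈ range (m + 1), q ^ (j + 1).choose 2 * gaussBinom q m (j + 1) * z ^ (j + 1) +
        q ^ (0 : ℕ).choose 2 * gaussBinom q (m + 1) 0 * z ^ 0 =
          ∑ j ∈ range (m + 1), q ^ j.choose 2 * gaussBinom q m j * z ^ j := by
      rw [gaussBinom_zero_right hq1, ← gaussBinom_zero_right hq1 m,
        ← sum_range_succ' (fun j => q ^ j.choose 2 * gaussBinom q m j * z ^ j),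
        sum_range_succ, gaussBinom_of_lt m.lt_succ_self]
      ring
    rw [prod_range_succ, ih, sum_range_succ' _ (m + 1), sum_congr rfl pascal, sum_add_distrib,
      add_right_comm, hshift, ← sum_mul, mul_add, mul_one]

lemma exists_norm_gaussBinom_le (hq1 : ‖q‖ < 1) : ∃ C, ∀ m j, ‖gaussBinom q m j‖ ≤ C := by
  have hφ := tendsto_qPochhammer hq1
  obtain ⟨A, hA⟩ := hφ.norm.bddAbove_range
  obtain ⟨B, hB⟩ := (hφ.inv₀ (eulerPhi_ne_zero hq1)).norm.bddAbove_range
  have hA0 : 0 ≤ A := (norm_nonneg _).trans (hA ⟨0, rfl⟩)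
  have hB0 : 0 ≤ B := (norm_nonneg _).trans (hB ⟨0, rfl⟩)
  refine ⟨A * B * B, fun m j => ?_⟩
  unfold gaussBinom
  split_ifs
  · rw [div_eq_mul_inv, mul_inv, ← mul_assoc, norm_mul, norm_mul]
    exact mul_le_mul (mul_le_mul (hA ⟨m, rfl⟩) (hB ⟨j, rfl⟩) (norm_nonneg _) hA0) (hB ⟨_, rfl⟩)
      (norm_nonneg _) (mul_nonneg hA0 hB0)
  · simpa using mul_nonneg (mul_nonneg hA0 hB0) hB0

lemma tendsto_gaussBinom {ι : Type*} (hq1 : ‖q‖ < 1) {l : Filter ι} {m j : ι → ℕ}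
    (hj : Tendsto j l atTop) (hmj : Tendsto (fun i => m i - j i) l atTop) :
    Tendsto (fun i => gaussBinom q (m i) (j i)) l (𝓝 (eulerPhi q)⁻¹) := by
  have hφ := tendsto_qPochhammer hq1
  have hφ0 := eulerPhi_ne_zero hq1
  have hm : Tendsto m l atTop := tendsto_atTop_mono (fun i => Nat.sub_le _ _) hmj
  have hlim := (hφ.comp hm).div ((hφ.comp hj).mul (hφ.comp hmj)) (mul_ne_zero hφ0 hφ0)
  rw [div_mul_cancel_left₀ hφ0] at hlim
  refine hlim.congr' ?_
  filter_upwards [hmj.eventually_ge_atTop 1] with i hi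
  simp only [Function.comp_apply, Pi.div_apply, gaussBinom, if_pos (show j i ≤ m i by omega)]

lemma summable_norm_pow_mul_zpow_triangle (hq : q ≠ 0) (hq1 : ‖q‖ < 1) (z : ℂ) :
    Summable fun k : ℕ => ‖z ^ k * q ^ ((k : ℤ) * (k + 1) / 2)‖ := by
  refine summable_of_ratio_norm_eventually_le one_half_lt_one ?_
  have hsmall : Tendsto (fun k : ℕ => ‖z‖ * ‖q‖ ^ (k + 1)) atTop (𝓝 0) := by
    simpa using ((tendsto_pow_atTop_nhds_zero_of_lt_one (norm_nonneg q) hq1).comp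
      (tendsto_add_atTop_nat 1)).const_mul ‖z‖
  filter_upwards [hsmall.eventually_le_const one_half_pos] with k hk
  have hstep : z ^ (k + 1) * q ^ (((k + 1 : ℕ) : ℤ) * ((k + 1 : ℕ) + 1) / 2) =
      (z * q ^ (k + 1)) * (z ^ k * q ^ ((k : ℤ) * (k + 1) / 2)) := by
    rw [Nat.cast_succ, triangle_add_one, zpow_add₀ hq]
    norm_cast
    ring
  rw [norm_norm, norm_norm, hstep, norm_mul (z * _), norm_mul z, norm_pow]
  exact mul_le_mul_of_nonneg_right hk (norm_nonneg _)

lemma summable_norm_zpow_mul_zpow_triangle (hq : q ≠ 0) (hq1 : ‖q‖ < 1) (w : ℂ) :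
    Summable fun n : ℤ => ‖w ^ n * q ^ (n * (n + 1) / 2)‖ := by
  refine Summable.of_nat_of_neg ?_ ?_
  · simpa only [zpow_natCast] using summable_norm_pow_mul_zpow_triangle hq hq1 w
  · refine (summable_norm_pow_mul_zpow_triangle hq hq1 (w⁻¹ * q⁻¹)).congr fun k => ?_
    rw [show -(k : ℤ) * (-k + 1) = k * (k + 1) + (-k) * 2 by ring,
      Int.add_mul_ediv_right _ _ two_ne_zero, zpow_add₀ hq, zpow_neg, zpow_neg, zpow_natCast,
      zpow_natCast, mul_pow, inv_pow, inv_pow]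
    congr 1
    ring

lemma prod_range_one_add_mul_pow_mul_one_add_inv_mul_pow (hq : q ≠ 0) (hw : w ≠ 0) (M : ℕ) :
    ∏ n ∈ range (M + 1), ((1 + w * q ^ n) * (1 + w⁻¹ * q ^ n)) =
      (1 + w) * (w ^ (M + 1))⁻¹ * q ^ (M + 1).choose 2 *
        ∏ k ∈ range (2 * M + 1), (1 + w * (q ^ M)⁻¹ * q ^ k) := by
  induction M with
  | zero =>
    rw [zero_add, prod_range_one, prod_range_one, Nat.choose_eq_zero_of_lt one_lt_two]
    field_simp
    ring
  | succ M ih =>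
    have hreindex : ∏ k ∈ range (2 * (M + 1) + 1), (1 + w * (q ^ (M + 1))⁻¹ * q ^ k) =
        (∏ k ∈ range (2 * M + 1), (1 + w * (q ^ M)⁻¹ * q ^ k)) * (1 + w * (q ^ (M + 1))⁻¹) *
          (1 + w * q ^ (M + 1)) := by
      rw [show 2 * (M + 1) + 1 = 2 * M + 1 + 1 + 1 by ring, prod_range_succ, prod_range_succ']
      congr 2
      · refine prod_congr rfl fun k _ => ?_
        rw [pow_succ, pow_succ]
        field_simp
      · simp
      · rw [show 2 * M + 1 + 1 = M + (M + 1) + 1 by ring, pow_add, pow_add]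
        field_simp
        ring
    rw [prod_range_succ, ih, hreindex, choose_two_succ (M + 1)]
    field_simp
    ring

/-- The `m`-th term of the Laurent expansion in `w` of `∏_{n ≤ M} (1 + w q^n)(1 + w⁻¹ q^n)`. -/
noncomputable def jacobiTerm (q w : ℂ) (M : ℕ) (m : ℤ) : ℂ :=
  if -(M : ℤ) - 1 ≤ m ∧ m ≤ M then
    gaussBinom q (2 * M + 1) (m + M + 1).toNat * ((1 + w) * (w ^ m * q ^ (m * (m + 1) / 2)))
  else 0

lemma prod_range_eq_tsum_jacobiTerm (hq : q ≠ 0) (hq1 : ‖q‖ < 1) (hw : w ≠ 0) (M : ℕ) :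
    ∏ n ∈ range (M + 1), ((1 + w * q ^ n) * (1 + w⁻¹ * q ^ n)) = ∑' m : ℤ, jacobiTerm q w M m := by
  have hsupport : ∀ m ∉ (range (2 * M + 1 + 1)).image (fun j : ℕ => (j : ℤ) - M - 1),
      jacobiTerm q w M m = 0 := by
    intro m hm
    exact if_neg fun h => hm (mem_image.2 ⟨(m + M + 1).toNat, mem_range.2 (by omega), by omega⟩)
  rw [prod_range_one_add_mul_pow_mul_one_add_inv_mul_pow hq hw,
    prod_one_add_mul_pow_eq_sum_gaussBinom hq1, mul_sum, tsum_eq_sum hsupport,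
    sum_image fun _ _ _ _ h => by omega]
  refine sum_congr rfl fun j hj => ?_
  have hj := mem_range.1 hj
  rw [jacobiTerm, if_pos (by omega), show ((j : ℤ) - M - 1 + M + 1).toNat = j by omega,
    ← choose_two_add_choose_two_sub_mul, zpow_sub₀ hq, zpow_add₀ hq,
    show (j : ℤ) - M - 1 = j + -((M + 1 : ℕ) : ℤ) by push_cast; ring, zpow_add₀ hw, zpow_neg,
    zpow_natCast, zpow_natCast, zpow_natCast, zpow_natCast, ← Nat.cast_mul, zpow_natCast, pow_mul,
    div_eq_mul_inv, mul_pow, inv_pow]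
  ring

lemma norm_jacobiTerm_le {C : ℝ} (hC : ∀ m j, ‖gaussBinom q m j‖ ≤ C) (M : ℕ) (m : ℤ) :
    ‖jacobiTerm q w M m‖ ≤ C * ‖(1 + w) * (w ^ m * q ^ (m * (m + 1) / 2))‖ := by
  unfold jacobiTerm
  split_ifs
  · rw [norm_mul]
    exact mul_le_mul_of_nonneg_right (hC _ _) (norm_nonneg _)
  · rw [norm_zero]
    exact mul_nonneg ((norm_nonneg _).trans (hC 0 0)) (norm_nonneg _)

lemma tendsto_jacobiTerm (hq1 : ‖q‖ < 1) (m : ℤ) :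
    Tendsto (fun M => jacobiTerm q w M m) atTop
      (𝓝 ((eulerPhi q)⁻¹ * ((1 + w) * (w ^ m * q ^ (m * (m + 1) / 2))))) := by
  have hj : Tendsto (fun M : ℕ => (m + M + 1).toNat) atTop atTop :=
    tendsto_atTop.2 fun b => eventually_atTop.2 ⟨b + m.natAbs, fun M hM => by omega⟩
  have hmj : Tendsto (fun M : ℕ => 2 * M + 1 - (m + M + 1).toNat) atTop atTop :=
    tendsto_atTop.2 fun b => eventually_atTop.2 ⟨b + m.natAbs, fun M hM => by omega⟩
  refine ((tendsto_gaussBinom hq1 hj hmj).mul_const _).congr' ?_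
  filter_upwards [eventually_ge_atTop m.natAbs] with M hM
  rw [jacobiTerm, if_pos (by omega)]

lemma tendsto_prod_range_one_add_mul_pow_mul_one_add_inv_mul_pow (hq : q ≠ 0) (hq1 : ‖q‖ < 1)
    (hw : w ≠ 0) :
    Tendsto (fun M => ∏ n ∈ range (M + 1), ((1 + w * q ^ n) * (1 + w⁻¹ * q ^ n))) atTop
      (𝓝 ((eulerPhi q)⁻¹ * ((1 + w) * ∑' m : ℤ, w ^ m * q ^ (m * (m + 1) / 2)))) := by
  obtain ⟨C, hC⟩ := exists_norm_gaussBinom_le hq1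
  have hbound : Summable fun m : ℤ => C * ‖(1 + w) * (w ^ m * q ^ (m * (m + 1) / 2))‖ := by
    simpa only [norm_mul, mul_assoc] using
      (summable_norm_zpow_mul_zpow_triangle hq hq1 w).mul_left (C * ‖1 + w‖)
  simp only [prod_range_eq_tsum_jacobiTerm hq hq1 hw, ← tsum_mul_left]
  exact tendsto_tsum_of_dominated_convergence hbound (tendsto_jacobiTerm hq1)
    (Eventually.of_forall (norm_jacobiTerm_le hC))

lemma zpow_mul_zpow_triangle_sub (hw : w ≠ 0) (n : ℤ) :
    w ^ n * q ^ (n * (n - 1) / 2) = w * (w ^ (n - 1) * q ^ ((n - 1) * (n - 1 + 1) / 2)) := by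
  rw [sub_add_cancel, mul_comm (n - 1), ← mul_assoc, ← zpow_one_add₀ hw, add_sub_cancel]

end

/-- for `0 < |q| < 1` and `w ≠ 0`,
`∏_{n=0}^∞ (1 + w q^n)(1 + w⁻¹ q^n) = φ(q)⁻¹ Σ_{n∈ℤ} w^n (q^{n(n+1)/2} + q^{n(n-1)/2})`,
the infinite product converging and the bilateral series converging absolutely. -/
theorem stmt_5 (q w : ℂ) (hq0 : 0 < ‖q‖) (hq1 : ‖q‖ < 1) (hw : w ≠ 0) :
    Multipliable (fun n : ℕ => (1 + w * q ^ n) * (1 + w⁻¹ * q ^ n)) ∧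
    Summable (fun n : ℤ => ‖w ^ n * (q ^ ((n * (n + 1)) / 2) + q ^ ((n * (n - 1)) / 2))‖) ∧
    (∏' n : ℕ, (1 + w * q ^ n) * (1 + w⁻¹ * q ^ n)) =
      (eulerPhi q)⁻¹ *
        ∑' n : ℤ, w ^ n * (q ^ ((n * (n + 1)) / 2) + q ^ ((n * (n - 1)) / 2)) := by
  have hq : q ≠ 0 := norm_pos_iff.mp hq0
  have hmul := (multipliable_one_add_mul_pow hq1 w).mul (multipliable_one_add_mul_pow hq1 w⁻¹)
  have hplus := summable_norm_zpow_mul_zpow_triangle hq hq1 w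
  have hminus : Summable fun n : ℤ => ‖w ^ n * q ^ (n * (n - 1) / 2)‖ := by
    refine (((Equiv.subRight (1 : ℤ)).summable_iff.2 hplus).mul_left ‖w‖).congr fun n => ?_
    rw [zpow_mul_zpow_triangle_sub hw n, norm_mul]
    rfl
  refine ⟨hmul, (hplus.add hminus).of_nonneg_of_le (fun _ => norm_nonneg _)
    fun n => mul_add (w ^ n) _ _ ▸ norm_add_le _ _, ?_⟩
  have hshift : ∑' n : ℤ, w ^ n * q ^ (n * (n - 1) / 2) =
      w * ∑' n : ℤ, w ^ n * q ^ (n * (n + 1) / 2) := by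
    simp only [zpow_mul_zpow_triangle_sub hw, tsum_mul_left]
    exact congrArg _ ((Equiv.subRight (1 : ℤ)).tsum_eq fun n => w ^ n * q ^ (n * (n + 1) / 2))
  rw [tendsto_nhds_unique (hmul.hasProd.tendsto_prod_nat.comp (tendsto_add_atTop_nat 1))
    (tendsto_prod_range_one_add_mul_pow_mul_one_add_inv_mul_pow hq hq1 hw),
    tsum_congr fun n => mul_add (w ^ n) _ _, hplus.of_norm.tsum_add hminus.of_norm, hshift]
  ring
end

section
/- Let a, b, t be complex numbers with a ≠ 0, b ≠ 0, and |t| < |a^ε b^δ|^{−1} for all four sign choices ε, δ ∈ {+1, −1}. Then Σ_{K=0}^∞ c_K(a) c_K(b) t^K = (1 − t^2) / ∏_{ε,δ∈{+1,−1}} (1 − a^ε b^δ t), where the series converges absolutely. -/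
/-!
The characters satisfy `c_{K+2}(x) = (x + x⁻¹) c_{K+1}(x) - c_K(x)`, so the products
`u_K = c_K(a) c_K(b)` satisfy the fourth-order linear recurrence whose characteristic roots are
the four numbers `a^ε b^δ`. Hence `∏ (1 - a^ε b^δ t)` times the generating series of `u` is a
polynomial of degree `< 4`, and the values `c_0, …, c_3` show that it is `1 - t²`. Working with the
recurrence instead of the closed form `c_K(x) = (x^{K+1} - x^{-K-1}) / (x - x⁻¹)` avoids any case
distinction on `a² = 1` or `b² = 1`. Absolute convergence follows from
`‖c_K(x)‖ ≤ (K + 1) (‖x‖^K + ‖x⁻¹‖^K)`.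
-/

noncomputable def suChar (x : ℂ) (K : ℕ) : ℂ :=
  ∑ j ∈ Finset.range (K + 1), x ^ ((K : ℤ) - 2 * (j : ℤ))

open Finset

/-- Multiplying the recurrence by `t ^ (K + d)` and summing over `K` expresses the generating
series of a linearly recurrent sequence through its first `d` terms. -/
theorem HasSum.sum_mul_sub_partialSum_eq_zero {R : Type*} [CommRing R] [TopologicalSpace R]
    [IsTopologicalRing R] [T2Space R] {u : ℕ → R} {t S : R} {d : ℕ} (p : Fin (d + 1) → R)
    (hrec : ∀ K, ∑ j, p j * u (K + j) = 0) (hS : HasSum (fun K ↦ u K * t ^ K) S) :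
    ∑ j : Fin (d + 1), p j * t ^ (d - j : ℕ) * (S - ∑ i ∈ range j, u i * t ^ i) = 0 := by
  have hshift : HasSum
      (fun K ↦ ∑ j : Fin (d + 1), p j * t ^ (d - j : ℕ) * (u (K + j) * t ^ (K + j)))
      (∑ j : Fin (d + 1), p j * t ^ (d - j : ℕ) * (S - ∑ i ∈ range j, u i * t ^ i)) :=
    hasSum_sum fun j _ ↦ ((hasSum_nat_add_iff' j).mpr hS).mul_left _
  refine hshift.unique ?_
  convert hasSum_zero with K
  calc ∑ j : Fin (d + 1), p j * t ^ (d - j : ℕ) * (u (K + j) * t ^ (K + j))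
      = t ^ (K + d) * ∑ j, p j * u (K + j) := by
        rw [mul_sum]
        refine sum_congr rfl fun j _ ↦ ?_
        have hj : d - j + (K + j) = K + d := by have := j.is_lt; omega
        rw [← hj, pow_add]
        ring
    _ = 0 := by rw [hrec, mul_zero]

theorem summable_succ_sq_mul_geometric {r : ℝ} (hr : ‖r‖ < 1) :
    Summable fun n : ℕ ↦ ((n : ℝ) + 1) ^ 2 * r ^ n := by
  have h2 := summable_pow_mul_geometric_of_norm_lt_one 2 hr
  have h1 := (summable_pow_mul_geometric_of_norm_lt_one 1 hr).mul_left 2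
  have h0 := summable_geometric_of_norm_lt_one hr
  exact ((h2.add h1).add h0).congr fun n ↦ by ring

theorem zpow_le_pow_add_inv_pow {y : ℝ} (hy : 0 < y) {K : ℕ} {e : ℤ} (h₁ : -(K : ℤ) ≤ e)
    (h₂ : e ≤ K) : y ^ e ≤ y ^ K + y⁻¹ ^ K := by
  rcases le_total 1 y with hy1 | hy1
  · have := zpow_le_zpow_right₀ hy1 h₂
    rw [zpow_natCast] at this
    linarith [pow_nonneg (inv_nonneg.mpr hy.le) K]
  · have := zpow_le_zpow_right_of_le_one₀ hy hy1 h₁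
    rw [zpow_neg, zpow_natCast, ← inv_pow] at this
    linarith [pow_nonneg hy.le K]

theorem norm_mul_lt_one_of_lt_inv {𝕜 : Type*} [NormedDivisionRing 𝕜] {c t : 𝕜}
    (h : ‖t‖ < ‖c‖⁻¹) : ‖c * t‖ < 1 := by
  rcases eq_or_ne c 0 with rfl | hc
  · simp
  · rw [norm_mul, ← lt_inv_mul_iff₀ (norm_pos_iff.mpr hc), mul_one]
    exact h

theorem suChar_zero (x : ℂ) : suChar x 0 = 1 := by simp [suChar]

theorem suChar_succ {x : ℂ} (hx : x ≠ 0) (K : ℕ) :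
    suChar x (K + 1) = x * suChar x K + x⁻¹ ^ (K + 1) := by
  rw [suChar, sum_range_succ, suChar, mul_sum]
  congr 1
  · refine sum_congr rfl fun j _ ↦ ?_
    rw [← zpow_one_add₀ hx]; push_cast; ring_nf
  · rw [inv_pow, ← zpow_natCast, ← zpow_neg]; push_cast; ring_nf

theorem suChar_add_two {x : ℂ} (hx : x ≠ 0) (K : ℕ) :
    suChar x (K + 2) = (x + x⁻¹) * suChar x (K + 1) - suChar x K := by
  rw [suChar_succ hx (K + 1), suChar_succ hx K, pow_succ _ (K + 1)]
  field_simp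
  ring

theorem suChar_one {x : ℂ} (hx : x ≠ 0) : suChar x 1 = x + x⁻¹ := by
  rw [suChar_succ hx, suChar_zero]; ring

theorem suChar_two {x : ℂ} (hx : x ≠ 0) : suChar x 2 = (x + x⁻¹) ^ 2 - 1 := by
  rw [suChar_add_two hx 0, suChar_one hx, suChar_zero]; ring

theorem suChar_three {x : ℂ} (hx : x ≠ 0) : suChar x 3 = (x + x⁻¹) ^ 3 - 2 * (x + x⁻¹) := by
  rw [suChar_add_two hx 1, suChar_two hx, suChar_one hx]; ring

theorem norm_suChar_le {x : ℂ} (hx : x ≠ 0) (K : ℕ) :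
    ‖suChar x K‖ ≤ (K + 1) * (‖x‖ ^ K + ‖x⁻¹‖ ^ K) := by
  calc ‖suChar x K‖ ≤ ∑ j ∈ range (K + 1), ‖x ^ ((K : ℤ) - 2 * (j : ℤ))‖ := norm_sum_le _ _
    _ ≤ ∑ j ∈ range (K + 1), (‖x‖ ^ K + ‖x⁻¹‖ ^ K) := by
        refine sum_le_sum fun j hj ↦ ?_
        have := mem_range.mp hj
        rw [norm_zpow, norm_inv]
        exact zpow_le_pow_add_inv_pow (norm_pos_iff.mpr hx) (by omega) (by omega)
    _ = (K + 1) * (‖x‖ ^ K + ‖x⁻¹‖ ^ K) := by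
        rw [sum_const, card_range, nsmul_eq_mul, Nat.cast_succ]

theorem suChar_mul_suChar_recurrence {a b : ℂ} (ha : a ≠ 0) (hb : b ≠ 0) (K : ℕ) :
    suChar a K * suChar b K - (a + a⁻¹) * (b + b⁻¹) * (suChar a (K + 1) * suChar b (K + 1))
      + ((a + a⁻¹) ^ 2 + (b + b⁻¹) ^ 2 - 2) * (suChar a (K + 2) * suChar b (K + 2))
      - (a + a⁻¹) * (b + b⁻¹) * (suChar a (K + 3) * suChar b (K + 3))
      + suChar a (K + 4) * suChar b (K + 4) = 0 := by
  simp only [suChar_add_two ha, suChar_add_two hb]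
  ring

theorem prod_one_sub_mul_eq {a b : ℂ} (ha : a ≠ 0) (hb : b ≠ 0) (t : ℂ) :
    (1 - a * b * t) * (1 - a * b⁻¹ * t) * (1 - a⁻¹ * b * t) * (1 - a⁻¹ * b⁻¹ * t) =
      1 - (a + a⁻¹) * (b + b⁻¹) * t + ((a + a⁻¹) ^ 2 + (b + b⁻¹) ^ 2 - 2) * t ^ 2
        - (a + a⁻¹) * (b + b⁻¹) * t ^ 3 + t ^ 4 := by
  field_simp
  ring

theorem mul_tsum_suChar_mul_suChar {a b t : ℂ} (ha : a ≠ 0) (hb : b ≠ 0)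
    (hS : Summable fun K ↦ suChar a K * suChar b K * t ^ K) :
    (1 - a * b * t) * (1 - a * b⁻¹ * t) * (1 - a⁻¹ * b * t) * (1 - a⁻¹ * b⁻¹ * t) *
      ∑' K, suChar a K * suChar b K * t ^ K = 1 - t ^ 2 := by
  set s := a + a⁻¹
  set r := b + b⁻¹
  have key := HasSum.sum_mul_sub_partialSum_eq_zero (u := fun K ↦ suChar a K * suChar b K)
    ![1, -(s * r), s ^ 2 + r ^ 2 - 2, -(s * r), 1]
    (fun K ↦ by
      simp only [Nat.succ_eq_add_one, Nat.reduceAdd, Fin.sum_univ_five, Matrix.cons_val,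
        Fin.coe_ofNat_eq_mod, Nat.reduceMod]
      linear_combination suChar_mul_suChar_recurrence ha hb K)
    hS.hasSum
  simp only [Nat.succ_eq_add_one, Nat.reduceAdd, Fin.sum_univ_five, Matrix.cons_val,
    Fin.coe_ofNat_eq_mod, Nat.reduceMod, Nat.reduceSub, sum_range_succ, range_zero, sum_empty,
    suChar_zero, suChar_one ha, suChar_one hb,
    suChar_two ha, suChar_two hb, suChar_three ha, suChar_three hb] at key
  rw [prod_one_sub_mul_eq ha hb]
  linear_combination key

theorem summable_norm_suChar_mul_suChar {a b t : ℂ} (ha : a ≠ 0) (hb : b ≠ 0)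
    (h₁ : ‖a * b * t‖ < 1) (h₂ : ‖a * b⁻¹ * t‖ < 1) (h₃ : ‖a⁻¹ * b * t‖ < 1)
    (h₄ : ‖a⁻¹ * b⁻¹ * t‖ < 1) :
    Summable fun K : ℕ ↦ ‖suChar a K * suChar b K * t ^ K‖ := by
  have hgeom {c : ℂ} (hc : ‖c‖ < 1) : Summable fun K : ℕ ↦ ((K : ℝ) + 1) ^ 2 * ‖c‖ ^ K :=
    summable_succ_sq_mul_geometric (by rwa [norm_norm])
  refine .of_nonneg_of_le (fun _ ↦ norm_nonneg _) (fun K ↦ ?_)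
    ((((hgeom h₁).add (hgeom h₂)).add (hgeom h₃)).add (hgeom h₄))
  calc ‖suChar a K * suChar b K * t ^ K‖ = ‖suChar a K‖ * ‖suChar b K‖ * ‖t‖ ^ K := by
        rw [norm_mul, norm_mul, norm_pow]
    _ ≤ ((K + 1) * (‖a‖ ^ K + ‖a⁻¹‖ ^ K)) * ((K + 1) * (‖b‖ ^ K + ‖b⁻¹‖ ^ K)) * ‖t‖ ^ K := by
        gcongr
        exacts [norm_suChar_le ha K, norm_suChar_le hb K]
    _ = _ := by
        simp only [norm_mul, mul_pow]
        ring

/-- for nonzero `a, b` and `|t| < |a^ε b^δ|⁻¹` for all sign choices,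
`Σ_{K=0}^∞ c_K(a) c_K(b) t^K = (1 - t²) / ∏_{ε,δ} (1 - a^ε b^δ t)`,
the series converging absolutely. -/
theorem stmt_6 (a b t : ℂ) (ha : a ≠ 0) (hb : b ≠ 0)
    (ht : ∀ ε δ : ℤ, (ε = 1 ∨ ε = -1) → (δ = 1 ∨ δ = -1) →
      ‖t‖ < (‖a ^ ε * b ^ δ‖)⁻¹) :
    Summable (fun K : ℕ => ‖suChar a K * suChar b K * t ^ K‖) ∧
    (∑' K : ℕ, suChar a K * suChar b K * t ^ K) =
      (1 - t ^ 2) /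
        ((1 - a * b * t) * (1 - a * b⁻¹ * t) * (1 - a⁻¹ * b * t) * (1 - a⁻¹ * b⁻¹ * t)) := by
  have hlt (ε δ : ℤ) (hε : ε = 1 ∨ ε = -1) (hδ : δ = 1 ∨ δ = -1) : ‖a ^ ε * b ^ δ * t‖ < 1 :=
    norm_mul_lt_one_of_lt_inv (ht ε δ hε hδ)
  have h₁ : ‖a * b * t‖ < 1 := by simpa using hlt 1 1 (by simp) (by simp)
  have h₂ : ‖a * b⁻¹ * t‖ < 1 := by simpa using hlt 1 (-1) (by simp) (by simp)
  have h₃ : ‖a⁻¹ * b * t‖ < 1 := by simpa using hlt (-1) 1 (by simp) (by simp)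
  have h₄ : ‖a⁻¹ * b⁻¹ * t‖ < 1 := by simpa using hlt (-1) (-1) (by simp) (by simp)
  have hfactor {c : ℂ} (hc : ‖c‖ < 1) : 1 - c ≠ 0 :=
    sub_ne_zero.mpr fun h ↦ by simp [← h] at hc
  have hP : (1 - a * b * t) * (1 - a * b⁻¹ * t) * (1 - a⁻¹ * b * t) * (1 - a⁻¹ * b⁻¹ * t) ≠ 0 :=
    mul_ne_zero (mul_ne_zero (mul_ne_zero (hfactor h₁) (hfactor h₂)) (hfactor h₃)) (hfactor h₄)
  have hsum := summable_norm_suChar_mul_suChar ha hb h₁ h₂ h₃ h₄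
  refine ⟨hsum, ?_⟩
  rw [eq_div_iff hP, mul_comm]
  exact mul_tsum_suChar_mul_suChar ha hb hsum.of_norm
end

section
/- Work in the ring R[[t]] of formal power series over the Laurent polynomial ring R = ℤ[u, u^{−1}, a, a^{−1}, b, b^{−1}], and set F(t) = (1 − t^2)(1 + u t)(1 + u^{−1} t) · ∏_{ε,δ∈{+1,−1}} (1 − a^ε b^δ t)^{−1} (each factor 1 − a^ε b^δ t has constant term 1, hence is invertible in R[[t]]). Then the coefficient of t^0 in F equals 1, and for every integer m ≥ 0 the coefficient of t^{m+1} in F equals (u + u^{−1}) c_m(a) c_m(b) + c_{m+1}(a) c_{m+1}(b) + c_{m−1}(a) c_{m−1}(b). -/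
/-- `suCharU x K = Σ_{j=0}^{K} x^{K-2j}` is the SU(2) character of the spin-`K/2`
representation evaluated at a unit `x` of a commutative ring, with the convention
that it vanishes for negative `K` (so `suCharU x (-1) = 0`). -/
def suCharU {R : Type*} [CommRing R] (x : Rˣ) (K : ℤ) : R :=
  if K < 0 then 0 else ∑ j ∈ Finset.range (K.toNat + 1), ((x ^ (K - 2 * (j : ℤ)) : Rˣ) : R)

/-!
Write `A = a + a⁻¹`, `B = b + b⁻¹`. The characters satisfy the Chebyshev recurrences
`c_{n+2}(a) = A c_{n+1}(a) - c_n(a)` and likewise with `B`, so their product satisfies the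
order-four recurrence whose reversed characteristic polynomial is
`∏_{ε,δ} (1 - a^ε b^δ t) = 1 - AB t + (A² + B² - 2) t² - AB t³ + t⁴`; comparing the first four
terms gives `∑ c_n(a) c_n(b) tⁿ = (1 - t²) / ∏_{ε,δ} (1 - a^ε b^δ t)`. Hence
`F = (1 + (u + u⁻¹) t + t²) ∑ c_n(a) c_n(b) tⁿ`, whose coefficients are the claimed ones.
-/

open PowerSeries

section

variable {R : Type*} [CommRing R]

lemma suCharU_of_neg (x : Rˣ) {k : ℤ} (hk : k < 0) : suCharU (R := R) x k = 0 := if_pos hk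

lemma suCharU_natCast (x : Rˣ) (n : ℕ) :
    suCharU x n = ∑ j ∈ Finset.range (n + 1), ((x ^ ((n : ℤ) - 2 * j) : Rˣ) : R) := by
  simp [suCharU]

lemma suCharU_zero (x : Rˣ) : suCharU (R := R) x 0 = 1 := by
  simp [suCharU]

lemma suCharU_natCast_succ (x : Rˣ) (n : ℕ) :
    suCharU x (n + 1 : ℕ) = (x : R) ^ (n + 1) + ↑x⁻¹ * suCharU x n := by
  rw [suCharU_natCast, suCharU_natCast, Finset.sum_range_succ', Finset.mul_sum, add_comm]
  congr 1
  refine Finset.sum_congr rfl fun j _ => ?_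
  rw [← Units.val_mul, ← zpow_neg_one, ← zpow_add]
  congr 2
  push_cast
  ring

lemma suCharU_one (x : Rˣ) : suCharU (R := R) x 1 = x + ↑x⁻¹ := by
  simpa [suCharU_zero] using suCharU_natCast_succ x 0

lemma suCharU_natCast_add_two (x : Rˣ) (n : ℕ) :
    suCharU x (n + 2 : ℕ) = (x + ↑x⁻¹) * suCharU x (n + 1 : ℕ) - suCharU x n := by
  rw [suCharU_natCast_succ x (n + 1), suCharU_natCast_succ x n]
  linear_combination (-suCharU x n) * x.mul_inv

lemma mul_add_four_of_add_two {s r : ℕ → R} {A B : R}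
    (hs : ∀ n, s (n + 2) = A * s (n + 1) - s n) (hr : ∀ n, r (n + 2) = B * r (n + 1) - r n)
    (n : ℕ) :
    s (n + 4) * r (n + 4) = A * B * (s (n + 3) * r (n + 3))
      - (A ^ 2 + B ^ 2 - 2) * (s (n + 2) * r (n + 2)) + A * B * (s (n + 1) * r (n + 1))
      - s n * r n := by
  rw [hs (n + 2), hr (n + 2), hs (n + 1), hr (n + 1), hs n, hr n]
  ring

theorem quartic_mul_mk_mul_eq_one_sub_X_sq {s r : ℕ → R} {A B : R}
    (hs₀ : s 0 = 1) (hs₁ : s 1 = A) (hs : ∀ n, s (n + 2) = A * s (n + 1) - s n)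
    (hr₀ : r 0 = 1) (hr₁ : r 1 = B) (hr : ∀ n, r (n + 2) = B * r (n + 1) - r n) :
    (1 - C (A * B) * X + C (A ^ 2 + B ^ 2 - 2) * X ^ 2 - C (A * B) * X ^ 3 + X ^ 4) *
      mk (fun n => s n * r n) = 1 - X ^ 2 := by
  have hs₂ : s 2 = A ^ 2 - 1 := by rw [hs 0, hs₁, hs₀]; ring
  have hs₃ : s 3 = A ^ 3 - 2 * A := by rw [hs 1, hs₂, hs₁]; ring
  have hr₂ : r 2 = B ^ 2 - 1 := by rw [hr 0, hr₁, hr₀]; ring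
  have hr₃ : r 3 = B ^ 3 - 2 * B := by rw [hr 1, hr₂, hr₁]; ring
  ext n
  simp only [sub_mul, add_mul, one_mul, mul_assoc, map_sub, map_add, coeff_C_mul, coeff_X_pow_mul',
    coeff_mk, coeff_one, coeff_X_pow]
  match n with
  | 0 | 1 | 2 | 3 => simp [hs₀, hr₀, hs₁, hr₁, hs₂, hr₂, hs₃, hr₃] <;> ring
  | n + 4 =>
    simp only [coeff_succ_X_mul, coeff_mk, le_add_iff_nonneg_left, zero_le, ↓reduceIte,
      Nat.reduceSubDiff, add_tsub_cancel_right, Nat.add_eq_zero_iff, OfNat.ofNat_ne_zero, and_false,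
      Nat.reduceEqDiff, sub_self]
    linear_combination mul_add_four_of_add_two hs hr n

lemma one_sub_C_mul_X_mul_one_sub_C_mul_X {x y : R} (h : x * y = 1) :
    (1 - C x * X) * (1 - C y * X) = 1 - C (x + y) * X + X ^ 2 := by
  have hC : C x * C y = 1 := by rw [← map_mul, h, map_one]
  rw [map_add]
  linear_combination X ^ 2 * hC

theorem prod_one_sub_C_units_mul_X (a b : Rˣ) :
    (1 - C (↑(a * b) : R) * X) * (1 - C (↑(a * b⁻¹) : R) * X) *
        (1 - C (↑(a⁻¹ * b) : R) * X) * (1 - C (↑(a⁻¹ * b⁻¹) : R) * X) =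
      1 - C (((a : R) + ↑a⁻¹) * ((b : R) + ↑b⁻¹)) * X
        + C (((a : R) + ↑a⁻¹) ^ 2 + ((b : R) + ↑b⁻¹) ^ 2 - 2) * X ^ 2
        - C (((a : R) + ↑a⁻¹) * ((b : R) + ↑b⁻¹)) * X ^ 3 + X ^ 4 := by
  set p : R := ↑(a * b) + ↑(a⁻¹ * b⁻¹)
  set q : R := ↑(a * b⁻¹) + ↑(a⁻¹ * b)
  have hsum : p + q = ((a : R) + ↑a⁻¹) * ((b : R) + ↑b⁻¹) := by
    simp only [p, q, Units.val_mul]; ring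
  have hprod : p * q + 2 = ((a : R) + ↑a⁻¹) ^ 2 + ((b : R) + ↑b⁻¹) ^ 2 - 2 := by
    simp only [p, q, Units.val_mul]
    linear_combination ((b : R) ^ 2 + ↑b⁻¹ ^ 2 - 2) * a.mul_inv
      + ((a : R) ^ 2 + ↑a⁻¹ ^ 2 - 2) * b.mul_inv
  calc _ = ((1 - C (↑(a * b) : R) * X) * (1 - C (↑(a⁻¹ * b⁻¹) : R) * X)) *
        ((1 - C (↑(a * b⁻¹) : R) * X) * (1 - C (↑(a⁻¹ * b) : R) * X)) := by ring
    _ = (1 - C p * X + X ^ 2) * (1 - C q * X + X ^ 2) := by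
      rw [one_sub_C_mul_X_mul_one_sub_C_mul_X (by rw [← Units.val_mul, mul_mul_mul_comm]; simp),
        one_sub_C_mul_X_mul_one_sub_C_mul_X (by rw [← Units.val_mul, mul_mul_mul_comm]; simp)]
    _ = _ := by
      rw [← hsum, ← hprod]
      simp only [map_add, map_mul, map_ofNat]
      ring

lemma mul_invOfUnit_eq_of_eq_mul {φ f g : R⟦X⟧} {u : Rˣ} (hφ : constantCoeff φ = u)
    (h : f = φ * g) : f * invOfUnit φ u = g := by
  rw [h, mul_right_comm, mul_invOfUnit φ u hφ, one_mul]

theorem one_sub_X_sq_mul_invOfUnit_eq_mk_suCharU_mul (a b : Rˣ) :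
    (1 - X ^ 2) * invOfUnit (1 - C (↑(a * b) : R) * X) 1 *
        invOfUnit (1 - C (↑(a * b⁻¹) : R) * X) 1 * invOfUnit (1 - C (↑(a⁻¹ * b) : R) * X) 1 *
        invOfUnit (1 - C (↑(a⁻¹ * b⁻¹) : R) * X) 1 =
      mk fun n : ℕ => suCharU a n * suCharU b n := by
  iterate 4 refine mul_invOfUnit_eq_of_eq_mul (by simp) ?_
  rw [← quartic_mul_mk_mul_eq_one_sub_X_sq (s := fun n : ℕ => suCharU a n)
    (r := fun n : ℕ => suCharU b n)
    (suCharU_zero a) (suCharU_one a) (suCharU_natCast_add_two a)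
    (suCharU_zero b) (suCharU_one b) (suCharU_natCast_add_two b), ← prod_one_sub_C_units_mul_X]
  ring

lemma one_add_C_mul_X_mul_one_add_C_inv_mul_X (u : Rˣ) :
    (1 + C (u : R) * X) * (1 + C (↑u⁻¹ : R) * X) = 1 + C ((u : R) + ↑u⁻¹) * X + X ^ 2 := by
  have hC : C (u : R) * C (↑u⁻¹ : R) = 1 := by rw [← map_mul, u.mul_inv, map_one]
  rw [map_add]
  linear_combination X ^ 2 * hC

end

/-- in `R[[t]]` over a (Laurent-polynomial-like) commutative ring with
invertible elements `u, a, b`, the series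
`F = (1-t²)(1+ut)(1+u⁻¹t) ∏_{ε,δ} (1 - a^ε b^δ t)⁻¹` (each factor `1 - a^ε b^δ t`
has constant term `1`, its inverse being `PowerSeries.invOfUnit _ 1`) has
`coeff 0 F = 1` and
`coeff (m+1) F = (u+u⁻¹) c_m(a) c_m(b) + c_{m+1}(a) c_{m+1}(b) + c_{m-1}(a) c_{m-1}(b)`. -/
theorem stmt_7 (R : Type*) [CommRing R] (u a b : Rˣ) :
    let F : PowerSeries R :=
      (1 - PowerSeries.X ^ 2) * (1 + PowerSeries.C (↑u : R) * PowerSeries.X) *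
        (1 + PowerSeries.C (↑u⁻¹ : R) * PowerSeries.X) *
        PowerSeries.invOfUnit (1 - PowerSeries.C (↑(a * b) : R) * PowerSeries.X) 1 *
        PowerSeries.invOfUnit (1 - PowerSeries.C (↑(a * b⁻¹) : R) * PowerSeries.X) 1 *
        PowerSeries.invOfUnit (1 - PowerSeries.C (↑(a⁻¹ * b) : R) * PowerSeries.X) 1 *
        PowerSeries.invOfUnit (1 - PowerSeries.C (↑(a⁻¹ * b⁻¹) : R) * PowerSeries.X) 1
    PowerSeries.coeff 0 F = 1 ∧
      ∀ m : ℕ, PowerSeries.coeff (m + 1) F =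
        ((u : R) + (↑u⁻¹ : R)) * suCharU a (m : ℤ) * suCharU b (m : ℤ) +
          suCharU a ((m : ℤ) + 1) * suCharU b ((m : ℤ) + 1) +
          suCharU a ((m : ℤ) - 1) * suCharU b ((m : ℤ) - 1) := by
  intro F
  have hF : F = (1 + C ((u : R) + ↑u⁻¹) * X + X ^ 2) *
      mk fun n : ℕ => suCharU a n * suCharU b n := by
    rw [← one_add_C_mul_X_mul_one_add_C_inv_mul_X, ← one_sub_X_sq_mul_invOfUnit_eq_mk_suCharU_mul]
    simp only [F]
    ring
  refine ⟨?_, fun m => ?_⟩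
  · simp [hF, suCharU_zero]
  · rw [hF]
    simp only [add_mul, one_mul, mul_assoc, map_add, coeff_C_mul, coeff_succ_X_mul,
      coeff_X_pow_mul', coeff_mk]
    rcases m with _ | m <;> simp [suCharU_zero, suCharU_one, suCharU_of_neg] <;> ring
end

section
/- Let R be a commutative ring and let X assign to every partition ν (of any nonnegative integer) an element X(ν) ∈ R. Encode a partition μ of n as a finitely supported function μ : {1, 2, ...} → ℕ with Σ_i i·μ(i) = n, and for a finite set S of part-sizes with μ(i) ≥ 1 for all i ∈ S, let μ∖S denote the partition of n − Σ_{i∈S} i obtained from μ by decreasing μ(i) by one for each i ∈ S. Then for every n ≥ 0: Σ_{μ partition of n} Σ_{S ⊆ {i : μ(i) ≥ 1}} (−1)^{|S|} X(μ∖S) = Σ_{j=0}^{n} c_j · ( Σ_{ν partition of n−j} X(ν) ), where c_j = Σ_{l=0}^{j} (−1)^l p_d(j; l) and p_d(j; l) is the number of partitions of j into exactly l distinct positive parts. -/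
/-!
Removing a set `S` of distinct part sizes from a partition `μ ⊢ n` leaves a partition
`ν ⊢ n - Σ S`, and `S` itself is a partition of `Σ S` into distinct parts; conversely
`μ = ν + S`. So the pairs `(μ, S)` correspond bijectively to triples `(j, p, ν)` with `p` a
partition of `j` into distinct parts and `ν ⊢ n - j`. The sign `(-1)^|S|` depends only on `p`,
and summing it over `p` gives `c_j`.
-/

/-- `cEuler j = Σ_{l=0}^{j} (-1)^l p_d(j; l)`, the alternating count of partitions of `j`
into distinct parts, i.e. the `j`-th Taylor coefficient of the Euler function. -/
def cEuler (j : ℕ) : ℤ :=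
  ∑ l ∈ Finset.range (j + 1),
    (-1 : ℤ) ^ l * (((Nat.Partition.distincts j).filter fun p => p.parts.card = l).card : ℤ)

open Finset

theorem cEuler_eq_sum_distincts (j : ℕ) :
    cEuler j = ∑ p ∈ Nat.Partition.distincts j, (-1 : ℤ) ^ Multiset.card p.parts := by
  have card_mem_range : ∀ p ∈ Nat.Partition.distincts j,
      Multiset.card p.parts ∈ range (j + 1) := fun p _ => by
    have := Multiset.card_nsmul_le_sum fun _ hx => p.parts_pos hx
    simpa [p.parts_sum, Nat.lt_succ_iff] using this
  rw [cEuler, ← sum_fiberwise_of_maps_to card_mem_range]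
  refine sum_congr rfl fun l _ => ?_
  rw [sum_congr rfl fun p hp => by rw [(mem_filter.mp hp).2], sum_const, nsmul_eq_mul, mul_comm]

theorem Finset.val_le_of_subset_toFinset {α : Type*} [DecidableEq α] {S : Finset α}
    {m : Multiset α} (h : S ⊆ m.toFinset) : S.val ≤ m :=
  (Multiset.le_iff_subset S.nodup).mpr fun _ hi => Multiset.mem_toFinset.mp (h hi)

namespace Multiset

variable {α : Type*} [DecidableEq α]

theorem toFinsupp_sub (s t : Multiset α) : toFinsupp (s - t) = toFinsupp s - toFinsupp t :=
  Finsupp.ext fun a => by simp only [toFinsupp_apply, Finsupp.tsub_apply, count_sub]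

theorem toFinsupp_val (S : Finset α) : toFinsupp S.val = ∑ i ∈ S, Finsupp.single i 1 := by
  conv_lhs => rw [← sum_map_singleton S.val]
  simp only [← Finset.sum_eq_multiset_sum, map_sum, toFinsupp_singleton]

end Multiset

namespace Nat.Partition

variable {n : ℕ}

theorem sum_tsub_add_sum (μ : n.Partition) {s : Multiset ℕ} (hs : s ≤ μ.parts) :
    (μ.parts - s).sum + s.sum = n := by
  rw [← Multiset.sum_add, tsub_add_cancel_of_le hs, μ.parts_sum]

def removeParts (μ : n.Partition) (s : Multiset ℕ) (hs : s ≤ μ.parts) :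
    (n - s.sum).Partition where
  parts := μ.parts - s
  parts_pos hi := μ.parts_pos (Multiset.mem_of_le (Multiset.sub_le_self _ _) hi)
  parts_sum := by have := μ.sum_tsub_add_sum hs; omega

def ofSubmultiset (μ : n.Partition) (s : Multiset ℕ) (hs : s ≤ μ.parts) :
    s.sum.Partition where
  parts := s
  parts_pos hi := μ.parts_pos (Multiset.mem_of_le hs hi)
  parts_sum := rfl

def append {a b : ℕ} (ν : a.Partition) (p : b.Partition) (h : a + b = n) : n.Partition where
  parts := ν.parts + p.parts
  parts_pos hi := (Multiset.mem_add.mp hi).elim ν.parts_pos p.parts_pos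
  parts_sum := by rw [Multiset.sum_add, ν.parts_sum, p.parts_sum, h]

theorem sigma_ext {a b : Σ j, j.Partition × (n - j).Partition} (h₁ : a.1 = b.1)
    (h₂ : a.2.1.parts = b.2.1.parts) (h₃ : a.2.2.parts = b.2.2.parts) : a = b := by
  obtain ⟨j, p, ν⟩ := a
  obtain ⟨j', p', ν'⟩ := b
  obtain rfl : j = j' := h₁
  obtain rfl := Nat.Partition.ext h₂
  obtain rfl := Nat.Partition.ext h₃
  rfl

theorem sum_sum_powerset_eq_sum_distincts {M : Type*} [AddCommMonoid M]
    (g : Multiset ℕ → Multiset ℕ → M) (n : ℕ) :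
    ∑ μ : n.Partition, ∑ S ∈ μ.parts.toFinset.powerset, g (μ.parts - S.val) S.val =
      ∑ j ∈ range (n + 1), ∑ p ∈ distincts j, ∑ ν : (n - j).Partition,
        g ν.parts p.parts := by
  have val_le_parts : ∀ a ∈ univ.sigma fun μ : n.Partition => μ.parts.toFinset.powerset,
      a.2.val ≤ a.1.parts :=
    fun _ ha => val_le_of_subset_toFinset (mem_powerset.mp (mem_sigma.mp ha).2)
  rw [sum_sigma']
  simp only [← sum_product']
  rw [sum_sigma']
  refine sum_bij'
    (fun a ha => ⟨a.2.val.sum,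
      a.1.ofSubmultiset a.2.val (val_le_parts a ha), a.1.removeParts a.2.val (val_le_parts a ha)⟩)
    (fun b hb => ⟨b.2.2.append b.2.1 (by have := mem_range.mp (mem_sigma.mp hb).1; omega),
      b.2.1.parts.toFinset⟩)
    ?_ ?_ ?_ ?_ (fun _ _ => rfl)
  · rintro ⟨μ, S⟩ hS
    have := μ.sum_tsub_add_sum (s := S.val) (val_le_parts _ hS)
    exact mem_sigma.mpr ⟨mem_range.mpr (by dsimp only; omega),
      mem_product.mpr ⟨mem_filter.mpr ⟨mem_univ _, S.nodup⟩, mem_univ _⟩⟩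
  · rintro ⟨j, p, ν⟩ -
    simp only [mem_sigma, mem_univ, mem_powerset, true_and, append]
    exact fun i hi => Multiset.mem_toFinset.mpr
      (Multiset.mem_add.mpr (Or.inr (Multiset.mem_toFinset.mp hi)))
  · rintro ⟨μ, S⟩ hS
    exact Sigma.ext (Nat.Partition.ext (tsub_add_cancel_of_le (val_le_parts _ hS)))
      (heq_of_eq S.val_toFinset)
  · rintro ⟨j, p, ν⟩ hp
    have hval : p.parts.toFinset.val = p.parts := by
      simp only [distincts, mem_sigma, mem_product, mem_filter] at hp
      exact Multiset.dedup_eq_self.mpr hp.2.1.2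
    refine sigma_ext ?_ hval ?_
    · exact (congrArg Multiset.sum hval).trans p.parts_sum
    · exact (congrArg (_ - ·) hval).trans (add_tsub_cancel_right _ _)

end Nat.Partition

/-- the combinatorial resummation.  Partitions `μ` of `n` are encoded as
finitely supported multiplicity functions `ℕ →₀ ℕ` (via `Multiset.toFinsupp` of the
multiset of parts of a `Nat.Partition`); for a set `S` of part-sizes occurring in `μ`,
`μ∖S` is obtained from `μ` by decreasing the multiplicity of each `i ∈ S` by one.  Then
`Σ_{μ ⊢ n} Σ_{S ⊆ supp μ} (-1)^{|S|} X(μ∖S) = Σ_{j=0}^{n} c_j Σ_{ν ⊢ n-j} X(ν)`. -/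
theorem stmt_11 (R : Type*) [CommRing R] (X : (ℕ →₀ ℕ) → R) (n : ℕ) :
    (∑ μ : Nat.Partition n, ∑ S ∈ (Multiset.toFinsupp μ.parts).support.powerset,
      (-1 : R) ^ S.card * X (Multiset.toFinsupp μ.parts - ∑ i ∈ S, Finsupp.single i 1)) =
    ∑ j ∈ Finset.range (n + 1), (cEuler j : R) *
      ∑ ν : Nat.Partition (n - j), X (Multiset.toFinsupp ν.parts) := by
  simp only [Multiset.toFinsupp_support, ← Multiset.toFinsupp_val, ← Multiset.toFinsupp_sub,
    cEuler_eq_sum_distincts, Int.cast_sum, Int.cast_pow, Int.cast_neg, Int.cast_one, sum_mul]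
  simp only [mul_sum]
  simpa only [card_val] using Nat.Partition.sum_sum_powerset_eq_sum_distincts
    (fun ν s => (-1 : R) ^ Multiset.card s * X (Multiset.toFinsupp ν)) n
end

section
/- Let q, z be complex numbers with 0 < |q| < 1 and z ≠ 0. Then Σ_{k∈ℤ} z^k q^{k^2} = Σ_{m=0}^∞ ( q^{m^2} − q^{(m+1)^2} ) · ( Σ_{k=−m}^{m} z^k ), where both series converge absolutely. -/
/-!
Summation by parts. With `a m = q ^ m²` and `χ m = ∑_{|k| ≤ m} z ^ k`,
`∑_{m ≤ N} (a m - a (m+1)) χ m = ∑_{|k| ≤ N} a |k| z ^ k - a (N+1) χ N`.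
Since `‖χ m‖ ≤ (2m+1) R ^ m ≤ (3R) ^ m` for any `R ≥ 1, ‖z‖, ‖z⁻¹‖`, and `C ^ m ‖q‖ ^ m²` is
summable for every `C`, all series converge absolutely and the boundary term tends to `0`, so the
symmetric partial sums of the theta series converge to the right-hand side.
-/

open Filter Topology Finset

noncomputable def sl2Char {𝕜 : Type*} [DivisionRing 𝕜] (z : 𝕜) (m : ℕ) : 𝕜 :=
  ∑ k ∈ Icc (-(m : ℤ)) m, z ^ k

lemma summable_pow_mul_pow_sq (a : ℝ) {b : ℝ} (hb0 : 0 ≤ b) (hb1 : b < 1) :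
    Summable fun n : ℕ => a ^ n * b ^ (n ^ 2) := by
  have hlim : Tendsto (fun n : ℕ => a * b ^ n) atTop (𝓝 0) := by
    simpa using (tendsto_pow_atTop_nhds_zero_of_lt_one hb0 hb1).const_mul a
  refine .of_norm_bounded_eventually_nat summable_geometric_two ?_
  filter_upwards [hlim.norm.eventually (gt_mem_nhds (by norm_num : ‖(0 : ℝ)‖ < 1 / 2))]
    with n hn
  rw [sq, pow_mul, ← mul_pow, norm_pow]
  exact pow_le_pow_left₀ (norm_nonneg _) hn.le n

section SymmetricAbel

variable {R : Type*} [CommRing R] (a : ℕ → R) (g : ℤ → R)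

lemma sum_range_sub_mul_sum_Icc_add (N : ℕ) :
    ∑ m ∈ range (N + 1), (a m - a (m + 1)) * ∑ k ∈ Icc (-(m : ℤ)) m, g k
      + a (N + 1) * ∑ k ∈ Icc (-(N : ℤ)) N, g k
      = ∑ k ∈ Icc (-(N : ℤ)) N, a k.natAbs * g k := by
  induction N with
  | zero => simp [sub_mul]
  | succ N ih =>
    rw [sum_range_succ, Nat.cast_succ, sum_Icc_succ_eq_add_endpoints,
      sum_Icc_succ_eq_add_endpoints, ← ih]
    rw [show ((N : ℤ) + 1).natAbs = N + 1 by omega, show (-((N : ℤ) + 1)).natAbs = N + 1 by omega]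
    ring

lemma hasSum_sub_mul_sum_Icc [TopologicalSpace R] [IsTopologicalRing R] [T2Space R] {L : R}
    (hL : HasSum (fun k : ℤ => a k.natAbs * g k) L)
    (hS : Summable fun m : ℕ => (a m - a (m + 1)) * ∑ k ∈ Icc (-(m : ℤ)) m, g k)
    (hbd : Tendsto (fun N : ℕ => a (N + 1) * ∑ k ∈ Icc (-(N : ℤ)) N, g k) atTop (𝓝 0)) :
    HasSum (fun m : ℕ => (a m - a (m + 1)) * ∑ k ∈ Icc (-(m : ℤ)) m, g k) L := by
  rw [hS.hasSum_iff_tendsto_nat, ← tendsto_add_atTop_iff_nat 1]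
  have hsym := (hL.comp tendsto_Icc_neg).sub hbd
  simp only [sub_zero, ← sum_range_sub_mul_sum_Icc_add a g, Function.comp_def,
    add_sub_cancel_right] at hsym
  exact hsym

end SymmetricAbel

section Bounds

variable {𝕜 : Type*} [NormedField 𝕜] {z q : 𝕜} {R : ℝ}

lemma norm_zpow_le_pow_natAbs (hz : ‖z‖ ≤ R) (hz' : ‖z⁻¹‖ ≤ R) (k : ℤ) :
    ‖z ^ k‖ ≤ R ^ k.natAbs := by
  obtain ⟨n, rfl | rfl⟩ := Int.eq_nat_or_neg k
  · rw [zpow_natCast, norm_pow, Int.natAbs_natCast]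
    exact pow_le_pow_left₀ (norm_nonneg z) hz n
  · rw [zpow_neg, ← inv_zpow, zpow_natCast, norm_pow, Int.natAbs_neg, Int.natAbs_natCast]
    exact pow_le_pow_left₀ (norm_nonneg _) hz' n

lemma norm_sl2Char_le (hR : 1 ≤ R) (hz : ‖z‖ ≤ R) (hz' : ‖z⁻¹‖ ≤ R) (m : ℕ) :
    ‖sl2Char z m‖ ≤ (3 * R) ^ m :=
  calc ‖sl2Char z m‖ ≤ ∑ k ∈ Icc (-(m : ℤ)) m, R ^ m := by
        refine (norm_sum_le _ _).trans (sum_le_sum fun k hk => ?_)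
        refine (norm_zpow_le_pow_natAbs hz hz' k).trans (pow_le_pow_right₀ hR ?_)
        rw [mem_Icc] at hk
        omega
    _ = (1 + m * 2) * R ^ m := by
        rw [sum_const, Int.card_Icc, nsmul_eq_mul]
        congr 1
        rw [show (m + 1 - -m : ℤ).toNat = 1 + m * 2 by omega]
        push_cast; rfl
    _ ≤ (1 + 2) ^ m * R ^ m := by
        gcongr
        exact one_add_mul_le_pow (by norm_num) m
    _ = (3 * R) ^ m := by norm_num [mul_pow]

lemma norm_pow_sq_sub_pow_succ_sq_le (hq : ‖q‖ ≤ 1) (m : ℕ) :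
    ‖q ^ (m ^ 2) - q ^ ((m + 1) ^ 2)‖ ≤ 2 * ‖q‖ ^ (m ^ 2) :=
  calc ‖q ^ (m ^ 2) - q ^ ((m + 1) ^ 2)‖ ≤ ‖q‖ ^ (m ^ 2) + ‖q‖ ^ ((m + 1) ^ 2) :=
        (norm_sub_le _ _).trans_eq (by rw [norm_pow, norm_pow])
    _ ≤ ‖q‖ ^ (m ^ 2) + ‖q‖ ^ (m ^ 2) := by
        linarith [pow_le_pow_of_le_one (norm_nonneg q) hq
          (Nat.pow_le_pow_left (Nat.le_add_right m 1) 2)]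
    _ = 2 * ‖q‖ ^ (m ^ 2) := by ring

lemma exists_norm_and_norm_inv_le (z : 𝕜) : ∃ R : ℝ, 1 ≤ R ∧ ‖z‖ ≤ R ∧ ‖z⁻¹‖ ≤ R :=
  ⟨max 1 (max ‖z‖ ‖z⁻¹‖), le_max_left _ _, by simp, by simp⟩

lemma zpow_sq_eq_pow_natAbs_sq (q : 𝕜) (k : ℤ) : q ^ (k ^ 2) = q ^ (k.natAbs ^ 2) := by
  rw [← Int.natAbs_sq k, ← Nat.cast_pow, zpow_natCast]

theorem summable_norm_zpow_mul_zpow_sq (z : 𝕜) (hq : ‖q‖ < 1) :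
    Summable fun k : ℤ => ‖z ^ k * q ^ (k ^ 2)‖ := by
  obtain ⟨R, -, hz, hz'⟩ := exists_norm_and_norm_inv_le z
  have hg := summable_pow_mul_pow_sq R (norm_nonneg q) hq
  have hgZ : Summable fun k : ℤ => R ^ k.natAbs * ‖q‖ ^ (k.natAbs ^ 2) :=
    .of_nat_of_neg (by simpa using hg) (by simpa using hg)
  refine .of_nonneg_of_le (fun _ => norm_nonneg _) (fun k => ?_) hgZ
  rw [norm_mul, zpow_sq_eq_pow_natAbs_sq, norm_pow]
  gcongr
  exact norm_zpow_le_pow_natAbs hz hz' k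

theorem summable_norm_sub_mul_sl2Char (z : 𝕜) (hq : ‖q‖ < 1) :
    Summable fun m : ℕ => ‖(q ^ (m ^ 2) - q ^ ((m + 1) ^ 2)) * sl2Char z m‖ := by
  obtain ⟨R, hR, hz, hz'⟩ := exists_norm_and_norm_inv_le z
  refine .of_nonneg_of_le (fun _ => norm_nonneg _) (fun m => ?_)
    ((summable_pow_mul_pow_sq (3 * R) (norm_nonneg q) hq).mul_left 2)
  calc _ = ‖q ^ (m ^ 2) - q ^ ((m + 1) ^ 2)‖ * ‖sl2Char z m‖ := norm_mul _ _
    _ ≤ 2 * ‖q‖ ^ (m ^ 2) * (3 * R) ^ m :=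
        mul_le_mul (norm_pow_sq_sub_pow_succ_sq_le hq.le m) (norm_sl2Char_le hR hz hz' m)
          (norm_nonneg _) (by positivity)
    _ = 2 * ((3 * R) ^ m * ‖q‖ ^ (m ^ 2)) := by ring

lemma tendsto_pow_succ_sq_mul_sl2Char (z : 𝕜) (hq : ‖q‖ < 1) :
    Tendsto (fun N : ℕ => q ^ ((N + 1) ^ 2) * sl2Char z N) atTop (𝓝 0) := by
  obtain ⟨R, hR, hz, hz'⟩ := exists_norm_and_norm_inv_le z
  refine squeeze_zero_norm (fun N => ?_)
    (summable_pow_mul_pow_sq (3 * R) (norm_nonneg q) hq).tendsto_atTop_zero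
  rw [norm_mul, norm_pow, mul_comm]
  exact mul_le_mul (norm_sl2Char_le hR hz hz' N)
    (pow_le_pow_of_le_one (norm_nonneg q) hq.le (Nat.pow_le_pow_left (Nat.le_add_right N 1) 2))
    (by positivity) (by positivity)

theorem hasSum_sub_mul_sl2Char [CompleteSpace 𝕜] (z : 𝕜) (hq : ‖q‖ < 1) :
    HasSum (fun m : ℕ => (q ^ (m ^ 2) - q ^ ((m + 1) ^ 2)) * sl2Char z m)
      (∑' k : ℤ, z ^ k * q ^ (k ^ 2)) := by
  have hθ := (summable_norm_zpow_mul_zpow_sq z hq).of_norm.hasSum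
  exact hasSum_sub_mul_sum_Icc (fun m => q ^ (m ^ 2)) (fun k => z ^ k)
    (hθ.congr_fun fun k => by rw [zpow_sq_eq_pow_natAbs_sq, mul_comm])
    (summable_norm_sub_mul_sl2Char z hq).of_norm (tendsto_pow_succ_sq_mul_sl2Char z hq)

end Bounds

theorem stmt_12_general (q z : ℂ) (hq1 : ‖q‖ < 1) :
    Summable (fun k : ℤ => ‖z ^ k * q ^ (k ^ 2)‖) ∧
    Summable (fun m : ℕ => ‖(q ^ (m ^ 2) - q ^ ((m + 1) ^ 2)) *
      ∑ k ∈ Finset.Icc (-(m : ℤ)) (m : ℤ), z ^ k‖) ∧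
    (∑' k : ℤ, z ^ k * q ^ (k ^ 2)) =
      ∑' m : ℕ, (q ^ (m ^ 2) - q ^ ((m + 1) ^ 2)) *
        ∑ k ∈ Finset.Icc (-(m : ℤ)) (m : ℤ), z ^ k :=
  ⟨summable_norm_zpow_mul_zpow_sq z hq1, summable_norm_sub_mul_sl2Char z hq1,
    (hasSum_sub_mul_sl2Char z hq1).tsum_eq.symm⟩

/-- for `0 < |q| < 1` and `z ≠ 0`,
`Σ_{k∈ℤ} z^k q^{k²} = Σ_{m=0}^∞ (q^{m²} - q^{(m+1)²}) Σ_{k=-m}^{m} z^k`,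
both series converging absolutely. -/
theorem stmt_12 (q z : ℂ) (hq0 : 0 < ‖q‖) (hq1 : ‖q‖ < 1) (hz : z ≠ 0) :
    Summable (fun k : ℤ => ‖z ^ k * q ^ (k ^ 2)‖) ∧
    Summable (fun m : ℕ => ‖(q ^ (m ^ 2) - q ^ ((m + 1) ^ 2)) *
      ∑ k ∈ Finset.Icc (-(m : ℤ)) (m : ℤ), z ^ k‖) ∧
    (∑' k : ℤ, z ^ k * q ^ (k ^ 2)) =
      ∑' m : ℕ, (q ^ (m ^ 2) - q ^ ((m + 1) ^ 2)) *
        ∑ k ∈ Finset.Icc (-(m : ℤ)) (m : ℤ), z ^ k :=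
  stmt_12_general q z hq1
end

section
/- Let q be a real number with 0 < q < 1 and let j1, j2, j3 be real numbers. Then Σ_{n=0}^∞ Σ_{m=0}^∞ (−1)^{n+m} q^{m(m+4j1+1)/2 + j1 + mn + n/2} (1 − q^{2m+1}) · Σ_{k=0}^{⌊n/2⌋} ( q^{(j2−n/2+k)^2} − q^{(j2+n/2−k+1)^2} )( q^{(j3−n/2+k)^2} − q^{(j3+n/2−k+1)^2} ) = Σ_{n=0}^∞ Σ_{m=0}^∞ (−1)^{n+m} q^{m(m+4j1+2n+1)/2 + j1 + n/2} ( q^{(j2−n/2)^2} − q^{(j2+n/2+1)^2} )( q^{(j3−n/2)^2} − q^{(j3+n/2+1)^2} ), where both iterated series converge absolutely. -/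
/-!
Exchange the two outer sums and fix `m`. The weight
`c n = (-1)^(n+m) q^(m(m+4j₁+1)/2 + j₁ + mn + n/2)` satisfies `c (n + 2) = q^(2m+1) c n`,
so after reindexing `n ↦ n + 2k` the finite inner sum over `k` becomes a geometric series in
`q^(2m+1)`, whose sum `(1 - q^(2m+1))⁻¹` cancels the prefactor. Absolute convergence comes from
the exponent bound `m(m+4j₁+1)/2 + j₁ + mn + n/2 ≥ (n+m)/2 + j₁ - 2j₁²`.
-/

open Finset

section Resummation

variable {𝕜 : Type*} [NormedField 𝕜] [CompleteSpace 𝕜]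

-- `G n k` stands for `F (n - 2k)`, phrased so that no truncated subtraction occurs.
theorem tsum_mul_sum_range_eq_of_add_two {c F : ℕ → 𝕜} {G : ℕ → ℕ → 𝕜} {r : 𝕜}
    (hr : ‖r‖ < 1) (hc : ∀ n, c (n + 2) = r * c n) (hG : ∀ n k, G (n + 2 * k) k = F n)
    (hcF : Summable fun n => ‖c n * F n‖) :
    ∑' n, c n * (1 - r) * ∑ k ∈ range (n / 2 + 1), G n k = ∑' n, c n * F n := by
  have hc_shift : ∀ n k, c (n + 2 * k) = c n * r ^ k := by
    intro n k
    induction k with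
    | zero => simp
    | succ k ih => rw [Nat.mul_succ, ← add_assoc, hc, ih, pow_succ]; ring
  let H : ℕ × ℕ → 𝕜 := fun p => if 2 * p.2 ≤ p.1 then c p.1 * (1 - r) * G p.1 p.2 else 0
  let shift : ℕ × ℕ → ℕ × ℕ := fun p => (p.1 + 2 * p.2, p.2)
  have hshift_inj : Function.Injective shift := by
    rintro ⟨n, k⟩ ⟨n', k'⟩ h
    simp only [shift, Prod.mk.injEq] at h
    ext <;> simp <;> omega
  have hH_supp : ∀ p ∉ Set.range shift, H p = 0 := by
    rintro ⟨n, k⟩ hp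
    refine if_neg fun hk => hp ⟨(n - 2 * k, k), ?_⟩
    simp only [shift, Prod.mk.injEq, and_true]
    omega
  have hH_shift : ∀ p, H (shift p) = c p.1 * F p.1 * ((1 - r) * r ^ p.2) := by
    rintro ⟨n, k⟩
    change (if 2 * k ≤ n + 2 * k then c (n + 2 * k) * (1 - r) * G (n + 2 * k) k else 0) = _
    rw [if_pos (Nat.le_add_left _ _), hc_shift, hG]
    ring
  have hV : Summable fun p : ℕ × ℕ => c p.1 * F p.1 * ((1 - r) * r ^ p.2) := by
    refine summable_mul_of_summable_norm (f := fun n => c n * F n)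
      (g := fun k => (1 - r) * r ^ k) hcF ?_
    simp_rw [norm_mul, norm_pow]
    exact (summable_geometric_of_lt_one (norm_nonneg r) hr).mul_left _
  have hH : Summable H :=
    (hshift_inj.summable_iff hH_supp).mp (by rwa [Function.comp_def, funext hH_shift])
  have hrow : ∀ n, ∑' k, H (n, k) = c n * (1 - r) * ∑ k ∈ range (n / 2 + 1), G n k := by
    intro n
    rw [tsum_eq_sum (s := range (n / 2 + 1)), mul_sum]
    · refine sum_congr rfl fun k hk => if_pos ?_
      rw [mem_range] at hk
      omega
    · intro k hk
      rw [mem_range] at hk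
      exact if_neg (by omega)
  have hgeom : ∑' k, (1 - r) * r ^ k = 1 := by
    have hr1 : (1 : 𝕜) - r ≠ 0 := sub_ne_zero.mpr fun h => by simp [← h] at hr
    rw [tsum_mul_left, tsum_geometric_of_norm_lt_one hr, mul_inv_cancel₀ hr1]
  calc ∑' n, c n * (1 - r) * ∑ k ∈ range (n / 2 + 1), G n k
      = ∑' p, H p := by rw [hH.tsum_prod]; exact tsum_congr fun n => (hrow n).symm
    _ = ∑' p, H (shift p) :=
        (hshift_inj.tsum_eq (Function.support_subset_iff'.mpr hH_supp)).symm
    _ = ∑' n, ∑' k, c n * F n * ((1 - r) * r ^ k) := by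
        rw [tsum_congr hH_shift, hV.tsum_prod]
    _ = ∑' n, c n * F n := tsum_congr fun n => by rw [tsum_mul_left, hgeom, mul_one]

theorem tsum_tsum_mul_sum_range_eq_of_add_two {c : ℕ → ℕ → 𝕜} {F : ℕ → 𝕜} {G : ℕ → ℕ → 𝕜}
    {r : ℕ → 𝕜} (hr : ∀ m, ‖r m‖ < 1) (hc : ∀ n m, c (n + 2) m = r m * c n m)
    (hG : ∀ n k, G (n + 2 * k) k = F n)
    (hcF : Summable fun x : ℕ × ℕ => ‖c x.1 x.2 * F x.1‖)
    (hcG : Summable fun x : ℕ × ℕ =>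
      ‖c x.1 x.2 * (1 - r x.2) * ∑ k ∈ range (x.1 / 2 + 1), G x.1 k‖) :
    ∑' n, ∑' m, c n m * (1 - r m) * ∑ k ∈ range (n / 2 + 1), G n k =
      ∑' n, ∑' m, c n m * F n := by
  have hcG' : Summable (Function.uncurry fun n m =>
      c n m * (1 - r m) * ∑ k ∈ range (n / 2 + 1), G n k) := hcG.of_norm
  have hcF' : Summable (Function.uncurry fun n m => c n m * F n) := hcF.of_norm
  rw [← hcG'.tsum_comm, ← hcF'.tsum_comm]
  exact tsum_congr fun m => tsum_mul_sum_range_eq_of_add_two (hr m) (fun n => hc n m) hG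
    (hcF.comp_injective (Prod.mk_left_injective m) :)

end Resummation

theorem summable_succ_mul_pow_mul_pow {s : ℝ} (hs0 : 0 ≤ s) (hs1 : s < 1) :
    Summable fun x : ℕ × ℕ => ((x.1 : ℝ) + 1) * s ^ x.1 * s ^ x.2 := by
  have hs : ‖s‖ < 1 := by rwa [Real.norm_of_nonneg hs0]
  have hgeom := summable_geometric_of_lt_one hs0 hs1
  have hsucc : Summable fun n : ℕ => ((n : ℝ) + 1) * s ^ n := by
    simpa [add_mul] using (summable_pow_mul_geometric_of_norm_lt_one 1 hs).add hgeom
  exact hsucc.mul_of_nonneg hgeom (fun n => by positivity) (fun m => by positivity)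

theorem abs_mul_one_sub_mul_sum_range_le {c r : ℝ} (hr0 : 0 ≤ r) (hr1 : r ≤ 1) {G : ℕ → ℝ}
    (hG : ∀ k, |G k| ≤ 1) (N : ℕ) : |c * (1 - r) * ∑ k ∈ range N, G k| ≤ |c| * N := by
  have hsum : |∑ k ∈ range N, G k| ≤ N := by
    simpa using
      (abs_sum_le_sum_abs G (range N)).trans (sum_le_card_nsmul _ _ 1 fun k _ => hG k)
  rw [abs_mul, abs_mul, abs_of_nonneg (sub_nonneg.mpr hr1)]
  calc |c| * (1 - r) * |∑ k ∈ range N, G k| ≤ |c| * 1 * N := by gcongr; linarith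
    _ = |c| * N := by ring

noncomputable def sqDiff (q a b : ℝ) : ℝ := q ^ (a ^ 2) - q ^ (b ^ 2)

noncomputable def weight (q j1 : ℝ) (n m : ℕ) : ℝ :=
  (-1) ^ (n + m) *
    q ^ ((m : ℝ) * ((m : ℝ) + 4 * j1 + 1) / 2 + j1 + (m : ℝ) * (n : ℝ) + (n : ℝ) / 2)

theorem weight_def' (q j1 : ℝ) (n m : ℕ) :
    weight q j1 n m = (-1) ^ (n + m) *
      q ^ ((m : ℝ) * ((m : ℝ) + 4 * j1 + 2 * (n : ℝ) + 1) / 2 + j1 + (n : ℝ) / 2) := by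
  rw [weight]
  ring_nf

section Estimates

variable {q : ℝ}

theorem abs_sqDiff_le_one (hq0 : 0 ≤ q) (hq1 : q ≤ 1) (a b : ℝ) : |sqDiff q a b| ≤ 1 :=
  abs_sub_le_of_nonneg_of_le (Real.rpow_nonneg hq0 _) (Real.rpow_le_one hq0 hq1 (sq_nonneg a))
    (Real.rpow_nonneg hq0 _) (Real.rpow_le_one hq0 hq1 (sq_nonneg b))

theorem abs_sqDiff_mul_sqDiff_le_one (hq0 : 0 ≤ q) (hq1 : q ≤ 1) (a b a' b' : ℝ) :
    |sqDiff q a b * sqDiff q a' b'| ≤ 1 := by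
  rw [abs_mul]
  exact mul_le_one₀ (abs_sqDiff_le_one hq0 hq1 a b) (abs_nonneg _)
    (abs_sqDiff_le_one hq0 hq1 a' b')

theorem weight_add_two (hq : 0 < q) (j1 : ℝ) (n m : ℕ) :
    weight q j1 (n + 2) m = q ^ (2 * m + 1) * weight q j1 n m := by
  have hexp : (m : ℝ) * ((m : ℝ) + 4 * j1 + 1) / 2 + j1 + (m : ℝ) * ((n + 2 : ℕ) : ℝ) +
      ((n + 2 : ℕ) : ℝ) / 2 = (m : ℝ) * ((m : ℝ) + 4 * j1 + 1) / 2 + j1 + (m : ℝ) * (n : ℝ) +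
      (n : ℝ) / 2 + ((2 * m + 1 : ℕ) : ℝ) := by
    push_cast; ring
  rw [weight, weight, hexp, Real.rpow_add hq, Real.rpow_natCast,
    show n + 2 + m = n + m + 2 by omega, pow_add, neg_one_sq]
  ring

theorem abs_weight_le (hq0 : 0 < q) (hq1 : q ≤ 1) (j1 : ℝ) (n m : ℕ) :
    |weight q j1 n m| ≤
      q ^ (j1 - 2 * j1 ^ 2) * ((q ^ (1 / 2 : ℝ)) ^ n * (q ^ (1 / 2 : ℝ)) ^ m) := by
  rw [weight, abs_mul, abs_pow, abs_neg, abs_one, one_pow, one_mul,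
    abs_of_pos (Real.rpow_pos_of_pos hq0 _), ← Real.rpow_mul_natCast hq0.le,
    ← Real.rpow_mul_natCast hq0.le, ← Real.rpow_add hq0, ← Real.rpow_add hq0]
  refine Real.rpow_le_rpow_of_exponent_ge hq0 hq1 ?_
  nlinarith [sq_nonneg ((m : ℝ) + 2 * j1), mul_nonneg m.cast_nonneg' n.cast_nonneg' (α := ℝ)]

theorem summable_succ_mul_abs_weight (hq0 : 0 < q) (hq1 : q < 1) (j1 : ℝ) :
    Summable fun x : ℕ × ℕ => ((x.1 : ℝ) + 1) * |weight q j1 x.1 x.2| := by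
  refine ((summable_succ_mul_pow_mul_pow (Real.rpow_nonneg hq0.le (1 / 2))
    (Real.rpow_lt_one hq0.le hq1 (by norm_num))).mul_left (q ^ (j1 - 2 * j1 ^ 2))).of_nonneg_of_le
    (fun x => by positivity) fun x => ?_
  calc ((x.1 : ℝ) + 1) * |weight q j1 x.1 x.2|
      ≤ ((x.1 : ℝ) + 1) *
        (q ^ (j1 - 2 * j1 ^ 2) * ((q ^ (1 / 2 : ℝ)) ^ x.1 * (q ^ (1 / 2 : ℝ)) ^ x.2)) := by
        gcongr
        exact abs_weight_le hq0 hq1.le j1 x.1 x.2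
    _ = _ := by ring

theorem summable_abs_weight_mul (hq0 : 0 < q) (hq1 : q < 1) (j1 : ℝ) {F : ℕ → ℝ}
    (hF : ∀ n, |F n| ≤ 1) : Summable fun x : ℕ × ℕ => |weight q j1 x.1 x.2 * F x.1| := by
  refine (summable_succ_mul_abs_weight hq0 hq1 j1).of_nonneg_of_le (fun _ => abs_nonneg _)
    fun x => ?_
  rw [abs_mul, mul_comm]
  gcongr
  linarith [hF x.1, x.1.cast_nonneg (α := ℝ)]

theorem summable_abs_weight_mul_one_sub_mul_sum (hq0 : 0 < q) (hq1 : q < 1) (j1 : ℝ)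
    {G : ℕ → ℕ → ℝ} (hG : ∀ n k, |G n k| ≤ 1) :
    Summable fun x : ℕ × ℕ =>
      |weight q j1 x.1 x.2 * (1 - q ^ (2 * x.2 + 1)) * ∑ k ∈ range (x.1 / 2 + 1), G x.1 k| := by
  refine (summable_succ_mul_abs_weight hq0 hq1 j1).of_nonneg_of_le (fun _ => abs_nonneg _)
    fun x => ?_
  refine (abs_mul_one_sub_mul_sum_range_le (by positivity)
    (pow_le_one₀ hq0.le hq1.le) (hG x.1) _).trans ?_
  rw [mul_comm]
  gcongr
  norm_cast
  omega

end Estimates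

/-- the final resummation in the computation of the branching functions
`ψ̃^K` of the free OSP(4|2) Gross–Neveu boundary partition function: for `0 < q < 1`
and real `j1, j2, j3`,
`Σ_{n,m≥0} (-1)^{n+m} q^{m(m+4j1+1)/2 + j1 + mn + n/2} (1-q^{2m+1})
   Σ_{k=0}^{⌊n/2⌋} (q^{(j2-n/2+k)²} - q^{(j2+n/2-k+1)²})(q^{(j3-n/2+k)²} - q^{(j3+n/2-k+1)²})
 = Σ_{n,m≥0} (-1)^{n+m} q^{m(m+4j1+2n+1)/2 + j1 + n/2}
   (q^{(j2-n/2)²} - q^{(j2+n/2+1)²})(q^{(j3-n/2)²} - q^{(j3+n/2+1)²})`,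
both iterated series converging absolutely (real powers of `q`). -/
theorem stmt_16 (q : ℝ) (hq0 : 0 < q) (hq1 : q < 1) (j1 j2 j3 : ℝ) :
    Summable (fun x : ℕ × ℕ => |(-1 : ℝ) ^ (x.1 + x.2) *
      q ^ (((x.2 : ℝ) * ((x.2 : ℝ) + 4 * j1 + 1)) / 2 + j1 + (x.2 : ℝ) * (x.1 : ℝ) +
        (x.1 : ℝ) / 2) * (1 - q ^ (2 * x.2 + 1)) *
      ∑ k ∈ Finset.range (x.1 / 2 + 1),
        ((q ^ ((j2 - (x.1 : ℝ) / 2 + (k : ℝ)) ^ 2) -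
            q ^ ((j2 + (x.1 : ℝ) / 2 - (k : ℝ) + 1) ^ 2)) *
          (q ^ ((j3 - (x.1 : ℝ) / 2 + (k : ℝ)) ^ 2) -
            q ^ ((j3 + (x.1 : ℝ) / 2 - (k : ℝ) + 1) ^ 2)))|) ∧
    Summable (fun x : ℕ × ℕ => |(-1 : ℝ) ^ (x.1 + x.2) *
      q ^ (((x.2 : ℝ) * ((x.2 : ℝ) + 4 * j1 + 2 * (x.1 : ℝ) + 1)) / 2 + j1 + (x.1 : ℝ) / 2) *
      ((q ^ ((j2 - (x.1 : ℝ) / 2) ^ 2) - q ^ ((j2 + (x.1 : ℝ) / 2 + 1) ^ 2)) *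
        (q ^ ((j3 - (x.1 : ℝ) / 2) ^ 2) - q ^ ((j3 + (x.1 : ℝ) / 2 + 1) ^ 2)))|) ∧
    (∑' n : ℕ, ∑' m : ℕ, (-1 : ℝ) ^ (n + m) *
      q ^ (((m : ℝ) * ((m : ℝ) + 4 * j1 + 1)) / 2 + j1 + (m : ℝ) * (n : ℝ) + (n : ℝ) / 2) *
      (1 - q ^ (2 * m + 1)) *
      ∑ k ∈ Finset.range (n / 2 + 1),
        ((q ^ ((j2 - (n : ℝ) / 2 + (k : ℝ)) ^ 2) -
            q ^ ((j2 + (n : ℝ) / 2 - (k : ℝ) + 1) ^ 2)) *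
          (q ^ ((j3 - (n : ℝ) / 2 + (k : ℝ)) ^ 2) -
            q ^ ((j3 + (n : ℝ) / 2 - (k : ℝ) + 1) ^ 2)))) =
    ∑' n : ℕ, ∑' m : ℕ, (-1 : ℝ) ^ (n + m) *
      q ^ (((m : ℝ) * ((m : ℝ) + 4 * j1 + 2 * (n : ℝ) + 1)) / 2 + j1 + (n : ℝ) / 2) *
      ((q ^ ((j2 - (n : ℝ) / 2) ^ 2) - q ^ ((j2 + (n : ℝ) / 2 + 1) ^ 2)) *
        (q ^ ((j3 - (n : ℝ) / 2) ^ 2) - q ^ ((j3 + (n : ℝ) / 2 + 1) ^ 2))) := by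
  have hr : ∀ m : ℕ, ‖q ^ (2 * m + 1)‖ < 1 := fun m => by
    rw [norm_pow, Real.norm_of_nonneg hq0.le]
    exact pow_lt_one₀ hq0.le hq1 (by omega)
  have habs₁ := summable_abs_weight_mul_one_sub_mul_sum hq0 hq1 j1
    (G := fun (n k : ℕ) => sqDiff q (j2 - n / 2 + k) (j2 + n / 2 - k + 1) *
      sqDiff q (j3 - n / 2 + k) (j3 + n / 2 - k + 1))
    fun _ _ => abs_sqDiff_mul_sqDiff_le_one hq0.le hq1.le _ _ _ _
  have habs₂ := summable_abs_weight_mul hq0 hq1 j1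
    (F := fun n : ℕ =>
      sqDiff q (j2 - n / 2) (j2 + n / 2 + 1) * sqDiff q (j3 - n / 2) (j3 + n / 2 + 1))
    fun _ => abs_sqDiff_mul_sqDiff_le_one hq0.le hq1.le _ _ _ _
  simp only [← weight_def']
  refine ⟨habs₁, habs₂, tsum_tsum_mul_sum_range_eq_of_add_two hr (weight_add_two hq0 j1)
    (fun n k => ?_) habs₂ habs₁⟩
  push_cast
  ring_nf
end
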